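/- Let S = ℂ[x, y]/(x² − y³) be the coordinate ring of the cuspidal cubic, with x, y denoting the images of the variables, let Ω_{S/ℂ} be the module of Kähler differentials of S over ℂ with universal derivation d, and let β = 2y·dx − 3x·dy ∈ Ω_{S/ℂ}. Then the torsion submodule of the S-module Ω_{S/ℂ} equals the S-submodule generated by β, and as a ℂ-vector space this torsion submodule has dimension 2, with basis given by β and y·β. -/

import Mathlib

/-!
The parametrisation `x ↦ t³, y ↦ t²` embeds `S` into `ℂ[t]`; comparing even and odd powers of
`t` shows that `S` is a domain and a free `ℂ[y]`-module with basis `1, x`.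

The presentation `S = ℂ[x, y]/(x² − y³)` presents `Ω_S` as `S² / S·(2x, −3y²)`. Contracting with
the weighted Euler field `3x ∂ₓ + 2y ∂_y` gives a linear form `S² → S` killing this relation
(quasi-homogeneity: it sends `df` to `6f`), so, `S` being a domain, every torsion form has a lift
in its kernel. A syzygy computation in the `ℂ[y]`-basis shows that this kernel is spanned by the
relation and by `(2y, −3x)`, the lift of `β`. Finally `xβ = y²β = 0`, so `Sβ` is spanned over `ℂ`
by `β` and `yβ`, and comparing first coordinates in a relation `(a + by)·(2y, −3x) = c·(2x, −3y²)`
shows that these two are independent.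
-/

open MvPolynomial

/-- The coordinate ring `S = ℂ[x, y]/(x² − y³)` of the cuspidal cubic. -/
noncomputable abbrev cuspCurve : Type :=
  MvPolynomial (Fin 2) ℂ ⧸ Ideal.span {(X 0 ^ 2 - X 1 ^ 3 : MvPolynomial (Fin 2) ℂ)}

/-- The image `x` of the first variable in `S`. -/
noncomputable def cx : cuspCurve := Ideal.Quotient.mk _ (X 0)

/-- The image `y` of the second variable in `S`. -/
noncomputable def cy : cuspCurve := Ideal.Quotient.mk _ (X 1)

/-- The Kähler differential form `β = 2y·dx − 3x·dy ∈ Ω_{S/ℂ}`. -/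
noncomputable def cuspBeta : KaehlerDifferential ℂ cuspCurve :=
  (2 * cy) • (KaehlerDifferential.D ℂ cuspCurve cx) -
    (3 * cx) • (KaehlerDifferential.D ℂ cuspCurve cy)

namespace Polynomial

theorem eq_zero_and_eq_zero_of_expand_two_add_X_mul_expand_two {R : Type*} [CommSemiring R]
    {A B : R[X]} (h : expand R 2 A + X * expand R 2 B = 0) : A = 0 ∧ B = 0 := by
  constructor <;> ext n
  · have hn := congrArg (coeff · (2 * n)) h
    simp only [coeff_add, coeff_expand_mul' two_pos, coeff_zero] at hn
    rcases n with _ | n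
    · simpa using hn
    · rwa [show 2 * (n + 1) = 2 * n + 1 + 1 by ring, coeff_X_mul, coeff_expand two_pos,
        if_neg (by omega), add_zero] at hn
  · have hn := congrArg (coeff · (2 * n + 1)) h
    rwa [coeff_add, coeff_X_mul, coeff_expand_mul' two_pos, coeff_expand two_pos,
      if_neg (by omega), zero_add] at hn

end Polynomial

theorem Algebra.isUnit_ofNat (K A : Type*) [Field K] [CharZero K] [Semiring A] [Algebra K A]
    (n : ℕ) [n.AtLeastTwo] : IsUnit (OfNat.ofNat n : A) := by
  have hn := (IsUnit.mk0 (OfNat.ofNat n : K) (NeZero.ne _)).map (algebraMap K A)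
  rwa [map_ofNat] at hn

namespace Cusp

open Polynomial (aeval expand)

theorem cx_sq : cx ^ 2 = cy ^ 3 :=
  Ideal.Quotient.eq.mpr (Ideal.subset_span rfl)

noncomputable def param : cuspCurve →ₐ[ℂ] Polynomial ℂ :=
  Ideal.Quotient.liftₐ _ (MvPolynomial.aeval ![(Polynomial.X ^ 3 : Polynomial ℂ), Polynomial.X ^ 2])
    fun a ha => by
      obtain ⟨c, rfl⟩ := Ideal.mem_span_singleton'.mp ha
      simp [← pow_mul]

@[simp] theorem param_cx : param cx = Polynomial.X ^ 3 :=
  MvPolynomial.aeval_X _ 0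

@[simp] theorem param_cy : param cy = Polynomial.X ^ 2 :=
  MvPolynomial.aeval_X _ 1

theorem param_aeval_cy (A : Polynomial ℂ) : param (aeval cy A) = expand ℂ 2 A := by
  rw [← Polynomial.aeval_algHom_apply, param_cy]
  rfl

theorem exists_eq_aeval_cy_add_aeval_cy_mul_cx (s : cuspCurve) :
    ∃ A B : Polynomial ℂ, s = aeval cy A + aeval cy B * cx := by
  obtain ⟨p, rfl⟩ := Ideal.Quotient.mk_surjective s
  induction p using MvPolynomial.induction_on with
  | C a =>
    refine ⟨Polynomial.C a, 0, ?_⟩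
    rw [Polynomial.aeval_C, map_zero, zero_mul, add_zero]
    rfl
  | add p q hp hq =>
    obtain ⟨A, B, hp⟩ := hp
    obtain ⟨A', B', hq⟩ := hq
    exact ⟨A + A', B + B', by rw [map_add, hp, hq, map_add, map_add]; ring⟩
  | mul_X p i hp =>
    obtain ⟨A, B, hp⟩ := hp
    rw [map_mul, hp]
    fin_cases i
    · refine ⟨Polynomial.X ^ 3 * B, A, ?_⟩
      change _ * cx = _
      simp only [map_mul, map_pow, Polynomial.aeval_X]
      linear_combination aeval cy B * cx_sq
    · exact ⟨Polynomial.X * A, Polynomial.X * B, by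
        change _ * cy = _
        simp only [map_mul, Polynomial.aeval_X]
        ring⟩

theorem param_aeval_cy_add_aeval_cy_mul_cx (A B : Polynomial ℂ) :
    param (aeval cy A + aeval cy B * cx) =
      expand ℂ 2 A + Polynomial.X * expand ℂ 2 (Polynomial.X * B) := by
  rw [map_add, map_mul, param_aeval_cy, param_aeval_cy, param_cx, map_mul, Polynomial.expand_X]
  ring

theorem eq_zero_and_eq_zero_of_aeval_cy_add_aeval_cy_mul_cx_eq_zero {A B : Polynomial ℂ}
    (h : aeval cy A + aeval cy B * cx = 0) : A = 0 ∧ B = 0 := by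
  have hparam := congrArg param h
  rw [param_aeval_cy_add_aeval_cy_mul_cx, map_zero] at hparam
  obtain ⟨hA, hXB⟩ := Polynomial.eq_zero_and_eq_zero_of_expand_two_add_X_mul_expand_two hparam
  exact ⟨hA, (mul_eq_zero.mp hXB).resolve_left Polynomial.X_ne_zero⟩

theorem param_injective : Function.Injective param := by
  refine (injective_iff_map_eq_zero param).mpr fun s hs => ?_
  obtain ⟨A, B, rfl⟩ := exists_eq_aeval_cy_add_aeval_cy_mul_cx s
  obtain ⟨rfl, hXB⟩ := Polynomial.eq_zero_and_eq_zero_of_expand_two_add_X_mul_expand_two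
    ((param_aeval_cy_add_aeval_cy_mul_cx A B).symm.trans hs)
  simp [(mul_eq_zero.mp hXB).resolve_left Polynomial.X_ne_zero]

instance : IsDomain cuspCurve := param_injective.isDomain param.toRingHom

theorem cx_ne_zero : cx ≠ 0 := fun h => by
  simpa using congrArg param h

noncomputable def presentation : Algebra.Presentation ℂ cuspCurve (Fin 2) Unit where
  __ := Algebra.Generators.naive
  relation _ := X 0 ^ 2 - X 1 ^ 3
  span_range_relation_eq_ker := by
    rw [Algebra.Generators.ker_naive, Set.range_const]

noncomputable def relVec : Fin 2 →₀ cuspCurve :=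
  Finsupp.single 0 (2 * cx) - Finsupp.single 1 (3 * cy ^ 2)

noncomputable def betaVec : Fin 2 →₀ cuspCurve :=
  Finsupp.single 0 (2 * cy) - Finsupp.single 1 (3 * cx)

@[simp] theorem relVec_zero : relVec 0 = 2 * cx := by simp [relVec]

@[simp] theorem relVec_one : relVec 1 = -(3 * cy ^ 2) := by simp [relVec]

@[simp] theorem betaVec_zero : betaVec 0 = 2 * cy := by simp [betaVec]

@[simp] theorem betaVec_one : betaVec 1 = -(3 * cx) := by simp [betaVec]

theorem presentation_differentialsRelations_relation :
    presentation.differentialsRelations.relation () = relVec := by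
  ext (i : Fin 2)
  change Ideal.Quotient.mk _ ((KaehlerDifferential.mvPolynomialBasis ℂ (Fin 2)).repr
    (KaehlerDifferential.D ℂ _ (X 0 ^ 2 - X 1 ^ 3)) i) = relVec i
  fin_cases i <;> simp [cx, cy, map_ofNat]

noncomputable def differentialsMap : (Fin 2 →₀ cuspCurve) →ₗ[cuspCurve] Ω[cuspCurve⁄ℂ] :=
  Finsupp.linearCombination cuspCurve fun i =>
    KaehlerDifferential.D ℂ cuspCurve (presentation.val i)

theorem differentialsMap_surjective : Function.Surjective differentialsMap :=
  presentation.differentialsSolution_isPresentation.surjective_π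

theorem ker_differentialsMap :
    LinearMap.ker differentialsMap = Submodule.span cuspCurve {relVec} := by
  have hrange : Set.range presentation.differentialsRelations.relation = {relVec} := by
    rw [← presentation_differentialsRelations_relation]
    exact Set.range_unique (ι := Unit)
  exact presentation.differentialsSolution_isPresentation.ker_π.trans
    (congrArg (Submodule.span cuspCurve) hrange)

theorem differentialsMap_relVec : differentialsMap relVec = 0 :=
  ker_differentialsMap.ge (Submodule.mem_span_singleton_self relVec)

theorem differentialsMap_betaVec : differentialsMap betaVec = cuspBeta := by
  rw [betaVec, map_sub, differentialsMap, Finsupp.linearCombination_single,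
    Finsupp.linearCombination_single]
  rfl

noncomputable def eulerForm : (Fin 2 →₀ cuspCurve) →ₗ[cuspCurve] cuspCurve :=
  Finsupp.linearCombination cuspCurve ![3 * cx, 2 * cy]

theorem eulerForm_apply (n : Fin 2 →₀ cuspCurve) :
    eulerForm n = n 0 * (3 * cx) + n 1 * (2 * cy) := by
  simp [eulerForm, Finsupp.linearCombination_apply, Finsupp.sum_fintype]

theorem eulerForm_relVec : eulerForm relVec = 0 := by
  rw [eulerForm_apply, relVec_zero, relVec_one]
  linear_combination 6 * cx_sq

theorem eulerForm_betaVec : eulerForm betaVec = 0 := by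
  rw [eulerForm_apply, betaVec_zero, betaVec_one]
  ring

theorem ker_eulerForm :
    LinearMap.ker eulerForm = Submodule.span cuspCurve {relVec, betaVec} := by
  refine le_antisymm (fun n hn => ?_) ?_
  · obtain ⟨A₀, A₁, hn₀⟩ := exists_eq_aeval_cy_add_aeval_cy_mul_cx (n 0)
    obtain ⟨B₀, B₁, hn₁⟩ := exists_eq_aeval_cy_add_aeval_cy_mul_cx (n 1)
    have hsplit : eulerForm n =
        aeval cy (Polynomial.X * (3 * Polynomial.X ^ 2 * A₁ + 2 * B₀)) +
          aeval cy (3 * A₀ + 2 * Polynomial.X * B₁) * cx := by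
      simp only [eulerForm_apply, hn₀, hn₁, map_add, map_mul, map_pow, map_ofNat,
        Polynomial.aeval_X]
      linear_combination 3 * aeval cy A₁ * cx_sq
    obtain ⟨hB₀, hA₀⟩ := eq_zero_and_eq_zero_of_aeval_cy_add_aeval_cy_mul_cx_eq_zero
      (hsplit.symm.trans hn)
    replace hB₀ := congrArg (Polynomial.aeval cy)
      ((mul_eq_zero.mp hB₀).resolve_left Polynomial.X_ne_zero)
    replace hA₀ := congrArg (Polynomial.aeval cy) hA₀
    simp only [map_add, map_mul, map_pow, map_ofNat, Polynomial.aeval_X, map_zero] at hA₀ hB₀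
    rw [← Submodule.smul_mem_iff_of_isUnit _ (Algebra.isUnit_ofNat ℂ cuspCurve 6),
      Submodule.mem_span_pair]
    refine ⟨3 * aeval cy A₁, -(2 * aeval cy B₁), ?_⟩
    refine Finsupp.ext (Fin.forall_fin_two.mpr ⟨?_, ?_⟩) <;>
      simp only [Finsupp.add_apply, Finsupp.smul_apply, smul_eq_mul, relVec_zero, relVec_one,
        betaVec_zero, betaVec_one, hn₀, hn₁]
    · linear_combination -2 * hA₀
    · linear_combination -3 * hB₀
  · rw [Submodule.span_le, Set.insert_subset_iff, Set.singleton_subset_iff]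
    exact ⟨eulerForm_relVec, eulerForm_betaVec⟩

theorem smul_cuspBeta_eq_zero_of_smul_betaVec_eq {a b : cuspCurve} (h : a • betaVec = b • relVec) :
    a • cuspBeta = 0 := by
  rw [← differentialsMap_betaVec, ← map_smul, h, map_smul, differentialsMap_relVec, smul_zero]

theorem cx_smul_cuspBeta : cx • cuspBeta = 0 := by
  refine smul_cuspBeta_eq_zero_of_smul_betaVec_eq (b := cy) ?_
  refine Finsupp.ext (Fin.forall_fin_two.mpr ⟨?_, ?_⟩) <;>
    simp only [Finsupp.smul_apply, smul_eq_mul, relVec_zero, relVec_one, betaVec_zero, betaVec_one]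
  · ring
  · linear_combination -3 * cx_sq

theorem cy_sq_smul_cuspBeta : cy ^ 2 • cuspBeta = 0 := by
  refine smul_cuspBeta_eq_zero_of_smul_betaVec_eq (b := cx) ?_
  refine Finsupp.ext (Fin.forall_fin_two.mpr ⟨?_, ?_⟩) <;>
    simp only [Finsupp.smul_apply, smul_eq_mul, relVec_zero, relVec_one, betaVec_zero, betaVec_one]
  · linear_combination -2 * cx_sq
  · ring

theorem cuspBeta_mem_torsion : cuspBeta ∈ Submodule.torsion cuspCurve Ω[cuspCurve⁄ℂ] :=
  ⟨⟨cx, mem_nonZeroDivisors_of_ne_zero cx_ne_zero⟩, cx_smul_cuspBeta⟩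

theorem torsion_eq_span_cuspBeta :
    Submodule.torsion cuspCurve Ω[cuspCurve⁄ℂ] = Submodule.span cuspCurve {cuspBeta} := by
  refine le_antisymm (fun ω hω => ?_)
    ((Submodule.span_singleton_le_iff_mem _ _).mpr cuspBeta_mem_torsion)
  obtain ⟨⟨r, hr⟩, hrω⟩ := hω
  obtain ⟨n, rfl⟩ := differentialsMap_surjective ω
  have hker : LinearMap.ker differentialsMap ≤ LinearMap.ker eulerForm := by
    rw [ker_differentialsMap, ker_eulerForm]
    exact Submodule.span_mono (Set.singleton_subset_iff.mpr (Set.mem_insert _ _))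
  have hrn : r * eulerForm n = 0 := by
    rw [← smul_eq_mul, ← map_smul]
    exact hker (by rw [LinearMap.mem_ker, map_smul]; exact hrω)
  have hn : n ∈ LinearMap.ker eulerForm :=
    (mul_eq_zero.mp hrn).resolve_left (nonZeroDivisors.ne_zero hr)
  obtain ⟨a, b, rfl⟩ := Submodule.mem_span_pair.mp (ker_eulerForm ▸ hn)
  rw [map_add, map_smul, map_smul, differentialsMap_relVec, differentialsMap_betaVec, smul_zero,
    zero_add]
  exact Submodule.smul_mem _ _ (Submodule.mem_span_singleton_self _)

theorem aeval_cy_smul_cuspBeta (A : Polynomial ℂ) :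
    aeval cy A • cuspBeta = A.coeff 0 • cuspBeta + A.coeff 1 • cy • cuspBeta := by
  have hA : aeval cy A = aeval cy A.divX.divX * cy ^ 2 + algebraMap ℂ cuspCurve (A.coeff 1) * cy +
      algebraMap ℂ cuspCurve (A.coeff 0) := by
    conv_lhs => rw [← A.divX_mul_X_add, ← A.divX.divX_mul_X_add]
    simp only [map_add, map_mul, Polynomial.aeval_X, Polynomial.aeval_C, Polynomial.coeff_divX]
    ring
  rw [hA]
  linear_combination (norm := module) aeval cy A.divX.divX • cy_sq_smul_cuspBeta

theorem restrictScalars_span_cuspBeta :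
    (Submodule.span cuspCurve {cuspBeta}).restrictScalars ℂ =
      Submodule.span ℂ {cuspBeta, cy • cuspBeta} := by
  refine le_antisymm (fun ω hω => ?_) ?_
  · obtain ⟨u, rfl⟩ := Submodule.mem_span_singleton.mp hω
    obtain ⟨A, B, rfl⟩ := exists_eq_aeval_cy_add_aeval_cy_mul_cx u
    rw [show (aeval cy A + aeval cy B * cx) • cuspBeta = aeval cy A • cuspBeta by
      linear_combination (norm := module) aeval cy B • cx_smul_cuspBeta, aeval_cy_smul_cuspBeta]
    exact Submodule.mem_span_pair.mpr ⟨_, _, rfl⟩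
  · rw [Submodule.span_le, Set.insert_subset_iff, Set.singleton_subset_iff]
    exact ⟨Submodule.mem_span_singleton_self _, Submodule.smul_mem
      (Submodule.span cuspCurve {cuspBeta}) cy (Submodule.mem_span_singleton_self _)⟩

theorem linearIndependent_cuspBeta : LinearIndependent ℂ ![cuspBeta, cy • cuspBeta] := by
  refine LinearIndependent.pair_iff.mpr fun s t hst => ?_
  set u := algebraMap ℂ cuspCurve s + algebraMap ℂ cuspCurve t * cy
  have hu : u • betaVec ∈ LinearMap.ker differentialsMap := by
    rw [LinearMap.mem_ker, map_smul, differentialsMap_betaVec]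
    linear_combination (norm := module) hst
  rw [ker_differentialsMap, Submodule.mem_span_singleton] at hu
  obtain ⟨c, hc⟩ := hu
  have hcoord : c * (2 * cx) = u * (2 * cy) := by
    simpa only [Finsupp.smul_apply, smul_eq_mul, relVec_zero, betaVec_zero] using congrArg (· 0) hc
  obtain ⟨A, B, rfl⟩ := exists_eq_aeval_cy_add_aeval_cy_mul_cx c
  have hsplit : aeval cy (2 * (Polynomial.X ^ 3 * B - Polynomial.C s * Polynomial.X -
      Polynomial.C t * Polynomial.X ^ 2)) + aeval cy (2 * A) * cx = 0 := by
    simp only [map_sub, map_mul, map_pow, map_ofNat, Polynomial.aeval_X, Polynomial.aeval_C]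
    linear_combination hcoord - 2 * aeval cy B * cx_sq
  obtain ⟨hP, -⟩ := eq_zero_and_eq_zero_of_aeval_cy_add_aeval_cy_mul_cx_eq_zero hsplit
  constructor
  · simpa [Polynomial.coeff_X_pow_mul'] using congrArg (Polynomial.coeff · 1) hP
  · simpa [Polynomial.coeff_X_pow_mul'] using congrArg (Polynomial.coeff · 2) hP

end Cusp

open Cusp in
/-- For the cuspidal cubic `S = ℂ[x,y]/(x² − y³)` and
`β = 2y·dx − 3x·dy ∈ Ω_{S/ℂ}`, the torsion submodule of the `S`-module `Ω_{S/ℂ}` equals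
the `S`-submodule generated by `β`, and as a `ℂ`-vector space this torsion submodule has
dimension `2`, with basis `β`, `y·β`. -/
theorem stmt_6 :
    Submodule.torsion cuspCurve (KaehlerDifferential ℂ cuspCurve) =
      Submodule.span cuspCurve {cuspBeta} ∧
    ∃ (h1 : cuspBeta ∈ Submodule.torsion cuspCurve (KaehlerDifferential ℂ cuspCurve))
      (h2 : cy • cuspBeta ∈ Submodule.torsion cuspCurve (KaehlerDifferential ℂ cuspCurve))
      (b : Module.Basis (Fin 2) ℂ (Submodule.torsion cuspCurve (KaehlerDifferential ℂ cuspCurve))),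
        b 0 = ⟨cuspBeta, h1⟩ ∧ b 1 = ⟨cy • cuspBeta, h2⟩ ∧
        Module.finrank ℂ
          (Submodule.torsion cuspCurve (KaehlerDifferential ℂ cuspCurve)) = 2 := by
  have hspan : Submodule.span ℂ (Set.range ![cuspBeta, cy • cuspBeta]) =
      (Submodule.torsion cuspCurve Ω[cuspCurve⁄ℂ]).restrictScalars ℂ := by
    rw [Matrix.range_cons_cons_empty, torsion_eq_span_cuspBeta, restrictScalars_span_cuspBeta]
  let b : Module.Basis (Fin 2) ℂ (Submodule.torsion cuspCurve Ω[cuspCurve⁄ℂ]) :=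
    (Module.Basis.span linearIndependent_cuspBeta).map (LinearEquiv.ofEq _ _ hspan)
  have hb : ∀ i, (b i : Ω[cuspCurve⁄ℂ]) = ![cuspBeta, cy • cuspBeta] i := fun i => by
    erw [Module.Basis.map_apply, LinearEquiv.coe_ofEq_apply, Module.Basis.span_apply]
  exact ⟨torsion_eq_span_cuspBeta, cuspBeta_mem_torsion,
    Submodule.smul_mem _ cy cuspBeta_mem_torsion, b, Subtype.ext (hb 0), Subtype.ext (hb 1),
    (Module.finrank_eq_card_basis b).trans (Fintype.card_fin 2)⟩
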